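/- arXiv:1505.00348 — 5 statements merged into one kernel-verified Lean document; each statement's English description precedes it below -/
import Mathlib

section
/- The homomorphism ϑ : Aut(Heis(3,ℤ)) → GL(2,ℤ) is surjective. -/
/-- The discrete Heisenberg group `Heis(3,ℤ)`: triples `(a,b,c)` of integers with
multiplication `(a₁,b₁,c₁)·(a₂,b₂,c₂) = (a₁+a₂, b₁+b₂, c₁+c₂+a₁b₂)`. -/
@[ext] structure Heis where
  a : ℤ
  b : ℤ
  c : ℤ

namespace Heis

instance : Mul Heis := ⟨fun x y => ⟨x.a + y.a, x.b + y.b, x.c + y.c + x.a * y.b⟩⟩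
instance : One Heis := ⟨⟨0, 0, 0⟩⟩
instance : Inv Heis := ⟨fun x => ⟨-x.a, -x.b, -x.c + x.a * x.b⟩⟩

@[simp] theorem mul_a (x y : Heis) : (x * y).a = x.a + y.a := rfl
@[simp] theorem mul_b (x y : Heis) : (x * y).b = x.b + y.b := rfl
@[simp] theorem mul_c (x y : Heis) : (x * y).c = x.c + y.c + x.a * y.b := rfl
@[simp] theorem one_a : (1 : Heis).a = 0 := rfl
@[simp] theorem one_b : (1 : Heis).b = 0 := rfl
@[simp] theorem one_c : (1 : Heis).c = 0 := rfl
@[simp] theorem inv_a (x : Heis) : x⁻¹.a = -x.a := rfl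
@[simp] theorem inv_b (x : Heis) : x⁻¹.b = -x.b := rfl
@[simp] theorem inv_c (x : Heis) : x⁻¹.c = -x.c + x.a * x.b := rfl

instance : Group Heis where
  mul_assoc x y z := by ext <;> simp <;> ring
  one_mul x := by ext <;> simp
  mul_one x := by ext <;> simp
  inv_mul_cancel x := by ext <;> simp

end Heis

/-- Triangular-type function `n ↦ n(n-1)/2`. -/
def HC (n : ℤ) : ℤ := n * (n - 1) / 2

theorem two_HC (n : ℤ) : 2 * HC n = n * (n - 1) := by
  have h : (2 : ℤ) ∣ n * (n - 1) := by
    rcases Int.even_or_odd n with h | h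
    · exact Dvd.dvd.mul_right h.two_dvd _
    · obtain ⟨k, hk⟩ := h
      exact Dvd.dvd.mul_left ⟨k, by omega⟩ _
  exact Int.mul_ediv_cancel' h

theorem HC_add (x y : ℤ) : HC (x + y) = HC x + HC y + x * y := by
  have h1 := two_HC (x + y)
  have h2 := two_HC x
  have h3 := two_HC y
  nlinarith [h1, h2, h3]

/-- The lift of a 2×2 integer matrix `[[p,q],[r,s]]` to an endomorphism of `Heis`. -/
def phi (p q r s : ℤ) : Heis →* Heis where
  toFun x := ⟨p * x.a + q * x.b, r * x.a + s * x.b,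
    (p * s - q * r) * x.c + p * r * HC x.a + q * r * (x.a * x.b) + q * s * HC x.b⟩
  map_one' := by ext <;> simp [HC]
  map_mul' x y := by
    ext <;> simp only [Heis.mul_a, Heis.mul_b, Heis.mul_c, HC_add] <;> ring

theorem phi_bijective (p q r s : ℤ) (hd : (p * s - q * r) * (p * s - q * r) = 1) :
    Function.Bijective (phi p q r s) := by
  constructor
  · intro x y hxy
    have ha : p * x.a + q * x.b = p * y.a + q * y.b := congrArg Heis.a hxy
    have hb : r * x.a + s * x.b = r * y.a + s * y.b := congrArg Heis.b hxy
    have hc : (p * s - q * r) * x.c + p * r * HC x.a + q * r * (x.a * x.b) + q * s * HC x.b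
        = (p * s - q * r) * y.c + p * r * HC y.a + q * r * (y.a * y.b) + q * s * HC y.b :=
      congrArg Heis.c hxy
    have haa : x.a = y.a := by
      linear_combination ((p*s-q*r)*s) * ha - ((p*s-q*r)*q) * hb - (x.a - y.a) * hd
    have hbb : x.b = y.b := by
      linear_combination ((p*s-q*r)*p) * hb - ((p*s-q*r)*r) * ha - (x.b - y.b) * hd
    have hcc : x.c = y.c := by
      rw [haa, hbb] at hc
      linear_combination (p*s-q*r) * hc - (x.c - y.c) * hd
    ext <;> assumption
  · intro z
    set d := p * s - q * r with hddef
    set A : ℤ := d * (s * z.a - q * z.b) with hA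
    set B : ℤ := d * (p * z.b - r * z.a) with hB
    refine ⟨⟨A, B, d * (z.c - (p * r * HC A + q * r * (A * B) + q * s * HC B))⟩, ?_⟩
    ext
    · show p * A + q * B = z.a
      rw [hA, hB]; linear_combination z.a * hd
    · show r * A + s * B = z.b
      rw [hA, hB]; linear_combination z.b * hd
    · show d * (d * (z.c - (p * r * HC A + q * r * (A * B) + q * s * HC B)))
        + p * r * HC A + q * r * (A * B) + q * s * HC B = z.c
      linear_combination (z.c - (p * r * HC A + q * r * (A * B) + q * s * HC B)) * hd

/-- The homomorphism `ϑ : Aut(Heis) → GL(2,ℤ)` is surjective. -/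
theorem heis_theta_surjective (ϑ : MulAut Heis →* GL (Fin 2) ℤ)
    (hϑ : ∀ (ω : MulAut Heis) (p : Heis),
      (ϑ ω : Matrix (Fin 2) (Fin 2) ℤ).mulVec ![p.a, p.b] = ![(ω p).a, (ω p).b]) :
    Function.Surjective ϑ := by
  intro M
  set m : Matrix (Fin 2) (Fin 2) ℤ := (M : Matrix (Fin 2) (Fin 2) ℤ) with hm
  have hdet : IsUnit m.det := (Matrix.isUnit_iff_isUnit_det m).mp M.isUnit
  have hd : (m 0 0 * m 1 1 - m 0 1 * m 1 0) * (m 0 0 * m 1 1 - m 0 1 * m 1 0) = 1 := by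
    rw [Matrix.det_fin_two] at hdet
    rcases Int.isUnit_iff.mp hdet with h | h <;> rw [h] <;> ring
  set p := m 0 0; set q := m 0 1; set r := m 1 0; set s := m 1 1
  let ω : MulAut Heis := MulEquiv.ofBijective (phi p q r s) (phi_bijective p q r s hd)
  refine ⟨ω, ?_⟩
  have h1 := hϑ ω ⟨1, 0, 0⟩
  have h2 := hϑ ω ⟨0, 1, 0⟩
  have hω1 : ω ⟨1, 0, 0⟩ = (⟨p, r, 0⟩ : Heis) := by
    show phi p q r s ⟨1,0,0⟩ = _
    ext <;> simp [phi, HC]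
  have hω2 : ω ⟨0, 1, 0⟩ = (⟨q, s, 0⟩ : Heis) := by
    show phi p q r s ⟨0,1,0⟩ = _
    ext <;> simp [phi, HC]
  rw [hω1] at h1
  rw [hω2] at h2
  apply Units.ext
  show (ϑ ω : Matrix (Fin 2) (Fin 2) ℤ) = m
  ext i j
  have e1 := congrFun h1 i
  have e2 := congrFun h2 i
  simp [Matrix.mulVec, dotProduct, Fin.sum_univ_two] at e1 e2
  fin_cases i <;> fin_cases j <;> simp_all <;> rfl
end

section
/- Let α_A, α_B, α_D be the automorphisms of Heis(3,ℤ) given by α_A(a,b,c) = (a+b, b, c+b(b-1)/2), α_B(a,b,c) = (a, b−a, c+a(a-1)·(−1)/2) and α_D(a,b,c) = (−a, b, −c−b). Then these automorphisms satisfy the relations α_A α_B α_A = α_B α_A α_B, (α_A α_B α_A)⁴ = id, α_D α_A α_D⁻¹ = α_A⁻¹, α_D α_B α_D⁻¹ = α_B⁻¹, and α_D² = id. -/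
private lemma ev (n : ℤ) : 2 ∣ n * n - n := by
  obtain ⟨k, hk⟩ := Int.even_mul_succ_self (n - 1)
  exact ⟨k, by linear_combination hk⟩

/-- The automorphisms `α_A (a,b,c) = (a+b, b, c + b*(b-1)/2)`,
`α_B (a,b,c) = (a, b-a, c + a*(a-1)*(-1)/2)` and `α_D (a,b,c) = (-a, b, -c-b)` of the
Heisenberg group satisfy the defining relations of `GL(2,ℤ)`:
`ABA = BAB`, `(ABA)⁴ = 1`, `DAD⁻¹ = A⁻¹`, `DBD⁻¹ = B⁻¹`, `D² = 1`. -/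
theorem heis_relations (A B D : MulAut Heis)
    (hA : ∀ p : Heis, A p = ⟨p.a + p.b, p.b, p.c + p.b * (p.b - 1) / 2⟩)
    (hB : ∀ p : Heis, B p = ⟨p.a, p.b - p.a, p.c + p.a * (p.a - 1) * (-1) / 2⟩)
    (hD : ∀ p : Heis, D p = ⟨-p.a, p.b, -p.c - p.b⟩) :
    A * B * A = B * A * B ∧
    (A * B * A) ^ 4 = 1 ∧
    D * A * D⁻¹ = A⁻¹ ∧
    D * B * D⁻¹ = B⁻¹ ∧
    D * D = 1 := by
  have key : ∀ (X Y : MulAut Heis), (∀ p : Heis, X p = Y p) → X = Y := fun X Y h =>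
    MulEquiv.ext h
  have key1 : ∀ X : MulAut Heis, (∀ p : Heis, X p = p) → X = 1 := fun X h =>
    MulEquiv.ext fun p => h p
  have hABA : A * B * A = B * A * B := by
    apply key; intro ⟨x, y, z⟩
    show A (B (A ⟨x, y, z⟩)) = B (A (B ⟨x, y, z⟩))
    simp only [hA, hB]
    have h1 := ev x; have h2 := ev y
    ext <;> simp only [] <;> ring_nf at h1 h2 ⊢ <;> omega
  have hDD : D * D = 1 := by
    apply key1; intro ⟨x, y, z⟩
    show D (D ⟨x, y, z⟩) = ⟨x, y, z⟩
    simp only [hD]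
    ext <;> simp only [] <;> omega
  have hDinv : D⁻¹ = D := inv_eq_of_mul_eq_one_right hDD
  have hDAD : D * A * D⁻¹ = A⁻¹ := by
    rw [hDinv]
    refine eq_inv_of_mul_eq_one_right (key1 _ ?_)
    intro ⟨x, y, z⟩
    show A (D (A (D ⟨x, y, z⟩))) = ⟨x, y, z⟩
    simp only [hA, hD]
    have h1 := ev x; have h2 := ev y
    ext <;> simp only [] <;> ring_nf at h1 h2 ⊢ <;> omega
  have hDBD : D * B * D⁻¹ = B⁻¹ := by
    rw [hDinv]
    refine eq_inv_of_mul_eq_one_right (key1 _ ?_)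
    intro ⟨x, y, z⟩
    show B (D (B (D ⟨x, y, z⟩))) = ⟨x, y, z⟩
    simp only [hB, hD]
    have h1 := ev x; have h2 := ev y
    ext <;> simp only [] <;> ring_nf at h1 h2 ⊢ <;> omega
  have hpow : (A * B * A) ^ 4 = 1 := by
    apply key1; intro ⟨x, y, z⟩
    show A (B (A (A (B (A (A (B (A (A (B (A ⟨x, y, z⟩))))))))))) = ⟨x, y, z⟩
    simp only [hA, hB]
    have h1 := ev x; have h2 := ev y
    ext <;> simp only [] <;> ring_nf at h1 h2 ⊢ <;> omega
  exact ⟨hABA, hpow, hDAD, hDBD, hDD⟩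
end

section
/- There exists a group homomorphism s : GL(2,ℤ) → Aut(Heis(3,ℤ)) with ϑ ∘ s = id (a section of ϑ over all of GL(2,ℤ)); consequently Aut(Heis(3,ℤ)) is isomorphic to the semidirect product (ℤ ⊕ ℤ) ⋊ GL(2,ℤ), where GL(2,ℤ) acts on ℤ ⊕ ℤ by the natural matrix action. -/
/-- The natural (matrix) action of `GL(2,ℤ)` on `ℤ ⊕ ℤ` (written multiplicatively, as needed
for semidirect products). -/
def glPhi : GL (Fin 2) ℤ →* MulAut (Multiplicative (Fin 2 → ℤ)) where
  toFun g :=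
    { toFun := fun v => Multiplicative.ofAdd ((g : Matrix (Fin 2) (Fin 2) ℤ).mulVec v.toAdd)
      invFun := fun v =>
        Multiplicative.ofAdd (((g⁻¹ : GL (Fin 2) ℤ) : Matrix (Fin 2) (Fin 2) ℤ).mulVec v.toAdd)
      left_inv := fun v => by
        simp only [toAdd_ofAdd, Matrix.mulVec_mulVec, Units.inv_mul, Matrix.one_mulVec, ofAdd_toAdd]
      right_inv := fun v => by
        simp only [toAdd_ofAdd, Matrix.mulVec_mulVec, Units.mul_inv, Matrix.one_mulVec, ofAdd_toAdd]
      map_mul' := fun v w => by simp only [toAdd_mul, Matrix.mulVec_add, ofAdd_add] }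
  map_one' := by ext v; simp
  map_mul' := fun g h => by
    ext v i; fin_cases i <;> simp [Matrix.mul_apply, Fin.sum_univ_two] <;> ring

namespace HeisAux

open Heis

/-- `n*(n-1)/2`. -/
def Tq (n : ℤ) : ℤ := n * (n - 1) / 2

lemma two_Tq (n : ℤ) : 2 * Tq n = n * (n - 1) := by
  apply Int.mul_ediv_cancel'
  rcases Int.even_or_odd n with ⟨k, hk⟩ | ⟨k, hk⟩
  · exact ⟨k * (n - 1), by rw [hk]; ring⟩
  · exact ⟨n * k, by rw [hk]; ring⟩

/-- linear correction term -/
def lam (P R e : ℤ) : ℤ := ((P + 1) * (R + 1) - 1 - e) / 2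

lemma lam_dvd (P Q R S e : ℤ) (he : e = P * S - Q * R) (h1 : e = 1 ∨ e = -1) :
    (2 : ℤ) ∣ (P + 1) * (R + 1) - 1 - e := by
  have h0 : (((P + 1) * (R + 1) - 1 - e : ℤ) : ZMod 2) = 0 := by
    push_cast
    have he2 : (e : ZMod 2) = (P : ZMod 2) * S - Q * R := by
      rw [he]; push_cast; ring
    have he1 : (e : ZMod 2) = 1 := by
      rcases h1 with h | h <;> rw [h] <;> norm_num <;> decide
    have key : ∀ x y z w : ZMod 2, x * w - y * z = 1 → (x + 1) * (z + 1) - 1 - 1 = 0 := by decide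
    rw [he1]
    exact key P Q R S (by rw [← he2, he1])
  exact_mod_cast (ZMod.intCast_zmod_eq_zero_iff_dvd _ 2).mp h0

lemma two_lam (P Q R S e : ℤ) (he : e = P * S - Q * R) (h1 : e = 1 ∨ e = -1) :
    2 * lam P R e = (P + 1) * (R + 1) - 1 - e :=
  Int.mul_ediv_cancel' (lam_dvd P Q R S e he h1)

lemma two_lam' (P Q R S e : ℤ) (he : e = P * S - Q * R) (h1 : e = 1 ∨ e = -1) :
    2 * lam Q S e = (Q + 1) * (S + 1) - 1 - e := by
  apply Int.mul_ediv_cancel'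
  exact lam_dvd Q (-P) S (-R) e (by rw [he]; ring) h1

/-- the `c`-cocycle -/
def fq (P Q R S e a b : ℤ) : ℤ :=
  P * R * Tq a + Q * S * Tq b + Q * R * (a * b) + lam P R e * a + lam Q S e * b

lemma fq_hom (p q r s e a b a' b' : ℤ) (he : e = p * s - q * r) :
    e * (a * b') + fq p q r s e (a + a') (b + b') =
      fq p q r s e a b + fq p q r s e a' b' + (p * a + q * b) * (r * a' + s * b') := by
  have hTa := two_Tq (a + a'); have hTb := two_Tq (b + b')
  have h3 := two_Tq a; have h4 := two_Tq b; have h5 := two_Tq a'; have h6 := two_Tq b'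
  unfold fq
  apply mul_left_cancel₀ (two_ne_zero : (2:ℤ) ≠ 0)
  linear_combination p*r*hTa + q*s*hTb - p*r*h3 - q*s*h4 - p*r*h5 - q*s*h6 + (2*a*b')*he

lemma fq_comp (p q r s p' q' r' s' a b : ℤ)
    (h1 : p * s - q * r = 1 ∨ p * s - q * r = -1)
    (h2 : p' * s' - q' * r' = 1 ∨ p' * s' - q' * r' = -1) :
    (p * s - q * r) * fq p' q' r' s' (p' * s' - q' * r') a b
      + fq p q r s (p * s - q * r) (p' * a + q' * b) (r' * a + s' * b)
    = fq (p * p' + q * r') (p * q' + q * s') (r * p' + s * r') (r * q' + s * s')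
        ((p * s - q * r) * (p' * s' - q' * r')) a b := by
  have hP : (p * s - q * r) * (p' * s' - q' * r') = 1 ∨
      (p * s - q * r) * (p' * s' - q' * r') = -1 := by
    rcases h1 with h | h <;> rcases h2 with h' | h' <;> rw [h, h'] <;> norm_num
  have hTa := two_Tq a; have hTb := two_Tq b
  have hTA := two_Tq (p' * a + q' * b); have hTB := two_Tq (r' * a + s' * b)
  have hl1 := two_lam p' q' r' s' _ rfl h2
  have hl2 := two_lam' p' q' r' s' _ rfl h2
  have hl3 := two_lam p q r s _ rfl h1
  have hl4 := two_lam' p q r s _ rfl h1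
  have hl5 := two_lam (p*p'+q*r') (p*q'+q*s') (r*p'+s*r') (r*q'+s*s')
      ((p * s - q * r) * (p' * s' - q' * r')) (by ring) hP
  have hl6 := two_lam' (p*p'+q*r') (p*q'+q*s') (r*p'+s*r') (r*q'+s*s')
      ((p * s - q * r) * (p' * s' - q' * r')) (by ring) hP
  unfold fq
  apply mul_left_cancel₀ (two_ne_zero : (2:ℤ) ≠ 0)
  linear_combination ((p*s-q*r)*p'*r' - (p*p'+q*r')*(r*p'+s*r')) * hTa
    + ((p*s-q*r)*q'*s' - (p*q'+q*s')*(r*q'+s*s')) * hTb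
    + p*r*hTA + q*s*hTB
    + ((p*s-q*r)*a)*hl1 + ((p*s-q*r)*b)*hl2
    + (p'*a+q'*b)*hl3 + (r'*a+s'*b)*hl4 - a*hl5 - b*hl6

end HeisAux

namespace HeisAux

abbrev Mat2 := Matrix (Fin 2) (Fin 2) ℤ

def rawMap (M : Mat2) : Heis → Heis := fun x =>
  ⟨M 0 0 * x.a + M 0 1 * x.b, M 1 0 * x.a + M 1 1 * x.b,
    M.det * x.c + fq (M 0 0) (M 0 1) (M 1 0) (M 1 1) M.det x.a x.b⟩

@[simp] lemma rawMap_a (M : Mat2) (x : Heis) :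
    (rawMap M x).a = M 0 0 * x.a + M 0 1 * x.b := rfl
@[simp] lemma rawMap_b (M : Mat2) (x : Heis) :
    (rawMap M x).b = M 1 0 * x.a + M 1 1 * x.b := rfl
@[simp] lemma rawMap_c (M : Mat2) (x : Heis) :
    (rawMap M x).c = M.det * x.c + fq (M 0 0) (M 0 1) (M 1 0) (M 1 1) M.det x.a x.b := rfl

lemma rawMap_one (x : Heis) : rawMap 1 x = x := by
  ext <;> simp [rawMap, fq, lam, Tq, Matrix.one_apply]

lemma rawMap_hom (M : Mat2) (x y : Heis) :
    rawMap M (x * y) = rawMap M x * rawMap M y := by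
  have hd := Matrix.det_fin_two M
  ext
  · simp; ring
  · simp; ring
  · simp only [rawMap_c, Heis.mul_c, Heis.mul_a, Heis.mul_b, rawMap_a, rawMap_b]
    linear_combination
      fq_hom (M 0 0) (M 0 1) (M 1 0) (M 1 1) M.det x.a x.b y.a y.b hd

lemma rawMap_comp (M N : Mat2) (hM : M.det = 1 ∨ M.det = -1)
    (hN : N.det = 1 ∨ N.det = -1) (x : Heis) :
    rawMap M (rawMap N x) = rawMap (M * N) x := by
  have hdM := Matrix.det_fin_two M
  have hdN := Matrix.det_fin_two N
  have hMul : ∀ i j, (M * N) i j = M i 0 * N 0 j + M i 1 * N 1 j := by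
    intro i j; rw [Matrix.mul_apply, Fin.sum_univ_two]
  have hM' : M 0 0 * M 1 1 - M 0 1 * M 1 0 = 1 ∨ M 0 0 * M 1 1 - M 0 1 * M 1 0 = -1 := by
    rw [← hdM]; exact hM
  have hN' : N 0 0 * N 1 1 - N 0 1 * N 1 0 = 1 ∨ N 0 0 * N 1 1 - N 0 1 * N 1 0 = -1 := by
    rw [← hdN]; exact hN
  have key := fq_comp (M 0 0) (M 0 1) (M 1 0) (M 1 1) (N 0 0) (N 0 1) (N 1 0) (N 1 1)
      x.a x.b hM' hN'
  ext
  · simp [hMul]; ring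
  · simp [hMul]; ring
  · simp only [rawMap_c, rawMap_a, rawMap_b]
    rw [Matrix.det_mul, hMul 0 0, hMul 0 1, hMul 1 0, hMul 1 1, hdM, hdN]
    linear_combination key

lemma det_pm (g : GL (Fin 2) ℤ) :
    (↑g : Mat2).det = 1 ∨ (↑g : Mat2).det = -1 := by
  have : IsUnit (↑g : Mat2).det := by
    apply Matrix.isUnit_iff_isUnit_det (↑g : Mat2) |>.mp
    exact ⟨g, rfl⟩
  exact Int.isUnit_iff.mp this

/-- the section as a `MulEquiv` for each `g` -/
def sAut (g : GL (Fin 2) ℤ) : MulAut Heis where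
  toFun := rawMap (↑g : Mat2)
  invFun := rawMap (↑g⁻¹ : Mat2)
  left_inv x := by
    rw [rawMap_comp _ _ (det_pm g⁻¹) (det_pm g), ← Units.val_mul, inv_mul_cancel g]
    exact rawMap_one x
  right_inv x := by
    rw [rawMap_comp _ _ (det_pm g) (det_pm g⁻¹), ← Units.val_mul, mul_inv_cancel g]
    exact rawMap_one x
  map_mul' x y := rawMap_hom _ x y

def sHom : GL (Fin 2) ℤ →* MulAut Heis where
  toFun := sAut
  map_one' := by
    apply MulEquiv.ext; intro x
    show rawMap (↑(1 : GL (Fin 2) ℤ) : Mat2) x = x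
    rw [Units.val_one]; exact rawMap_one x
  map_mul' g h := by
    apply MulEquiv.ext; intro x
    show rawMap (↑(g * h) : Mat2) x = rawMap (↑g : Mat2) (rawMap (↑h : Mat2) x)
    rw [Units.val_mul]
    exact (rawMap_comp _ _ (det_pm g) (det_pm h) x).symm

end HeisAux

namespace HeisAux

lemma mulVec_pair (M : Mat2) (a b : ℤ) :
    M.mulVec ![a, b] = ![M 0 0 * a + M 0 1 * b, M 1 0 * a + M 1 1 * b] := by
  funext i
  fin_cases i <;> simp [Matrix.mulVec, dotProduct, Fin.sum_univ_two]

lemma mat_ext_of_mulVec (A B : Mat2)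
    (h : ∀ a b : ℤ, A.mulVec ![a, b] = B.mulVec ![a, b]) : A = B := by
  ext i j
  fin_cases j
  · have := congrFun (h 1 0) i
    rw [mulVec_pair, mulVec_pair] at this
    fin_cases i <;> simpa using this
  · have := congrFun (h 0 1) i
    rw [mulVec_pair, mulVec_pair] at this
    fin_cases i <;> simpa using this

/-- kernel elements -/
def iota (v : Fin 2 → ℤ) : MulAut Heis where
  toFun p := ⟨p.a, p.b, p.c - v 1 * p.a + v 0 * p.b⟩
  invFun p := ⟨p.a, p.b, p.c + v 1 * p.a - v 0 * p.b⟩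
  left_inv p := by ext <;> simp <;> ring
  right_inv p := by ext <;> simp <;> ring
  map_mul' p q := by ext <;> simp <;> ring

@[simp] lemma iota_a (v : Fin 2 → ℤ) (p : Heis) : (iota v p).a = p.a := rfl
@[simp] lemma iota_b (v : Fin 2 → ℤ) (p : Heis) : (iota v p).b = p.b := rfl
@[simp] lemma iota_c (v : Fin 2 → ℤ) (p : Heis) :
    (iota v p).c = p.c - v 1 * p.a + v 0 * p.b := rfl

def iotaHom : Multiplicative (Fin 2 → ℤ) →* MulAut Heis where
  toFun v := iota (Multiplicative.toAdd v)
  map_one' := by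
    apply MulEquiv.ext; intro p
    ext <;> simp
  map_mul' v w := by
    apply MulEquiv.ext; intro p
    show iota _ p = iota _ (iota _ p)
    ext <;> simp [toAdd_mul] <;> ring

lemma compat (g : GL (Fin 2) ℤ) :
    iotaHom.comp (glPhi g).toMonoidHom =
      (MulAut.conj (sHom g)).toMonoidHom.comp iotaHom := by
  apply MonoidHom.ext; intro v
  have hd := Matrix.det_fin_two (↑g : Mat2)
  have key : iota ((↑g : Mat2).mulVec (Multiplicative.toAdd v)) * sHom g
      = sHom g * iota (Multiplicative.toAdd v) := by
    apply MulEquiv.ext; intro p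
    show iota _ (rawMap (↑g : Mat2) p) = rawMap (↑g : Mat2) (iota _ p)
    ext
    · simp
    · simp
    · simp only [iota_c, iota_a, iota_b, rawMap_c, rawMap_a, rawMap_b]
      simp only [Matrix.mulVec, dotProduct, Fin.sum_univ_two]
      rw [hd]
      ring
  show iotaHom ((glPhi g) v) = MulAut.conj (sHom g) (iotaHom v)
  have h0 : iotaHom ((glPhi g) v) =
      iota ((↑g : Mat2).mulVec (Multiplicative.toAdd v)) := rfl
  rw [h0, MulAut.conj_apply]
  show _ = sHom g * iotaHom v * (sHom g)⁻¹
  have h1 : (iotaHom v : MulAut Heis) = iota (Multiplicative.toAdd v) := rfl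
  rw [h1, ← key, mul_inv_cancel_right]

end HeisAux

/-- There is a group-homomorphism section `s : GL(2,ℤ) → Aut(Heis)` of `ϑ`; consequently
`Aut(Heis) ≅ (ℤ ⊕ ℤ) ⋊ GL(2,ℤ)` for the natural matrix action of `GL(2,ℤ)` on `ℤ ⊕ ℤ`. -/
theorem heis_aut_semidirect (ϑ : MulAut Heis →* GL (Fin 2) ℤ)
    (hϑ : ∀ (ω : MulAut Heis) (p : Heis),
      (ϑ ω : Matrix (Fin 2) (Fin 2) ℤ).mulVec ![p.a, p.b] = ![(ω p).a, (ω p).b]) :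
    (∃ s : GL (Fin 2) ℤ →* MulAut Heis, ∀ g, ϑ (s g) = g) ∧
    Nonempty (MulAut Heis ≃* (Multiplicative (Fin 2 → ℤ)) ⋊[glPhi] GL (Fin 2) ℤ) := by
  classical
  -- the section property
  have hsec : ∀ g, ϑ (HeisAux.sHom g) = g := by
    intro g
    apply Units.ext
    apply HeisAux.mat_ext_of_mulVec
    intro a b
    have h := hϑ (HeisAux.sHom g) ⟨a, b, 0⟩
    refine h.trans ?_
    rw [HeisAux.mulVec_pair]
    rfl
  -- kernel characterization, one direction
  have hker : ∀ ω : MulAut Heis, ϑ ω = 1 →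
      ∀ p : Heis, (ω p).a = p.a ∧ (ω p).b = p.b := by
    intro ω h p
    have h2 := hϑ ω p
    rw [h, Units.val_one, Matrix.one_mulVec] at h2
    constructor
    · have := congrFun h2 0; simpa using this.symm
    · have := congrFun h2 1; simpa using this.symm
  -- other direction
  have hker' : ∀ ω : MulAut Heis, (∀ p : Heis, (ω p).a = p.a ∧ (ω p).b = p.b) →
      ϑ ω = 1 := by
    intro ω h
    apply Units.ext
    apply HeisAux.mat_ext_of_mulVec
    intro a b
    have h2 := hϑ ω ⟨a, b, 0⟩
    rw [Units.val_one, Matrix.one_mulVec]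
    refine h2.trans ?_
    rw [(h ⟨a, b, 0⟩).1, (h ⟨a, b, 0⟩).2]
  set Φ : (Multiplicative (Fin 2 → ℤ)) ⋊[glPhi] GL (Fin 2) ℤ →* MulAut Heis :=
    SemidirectProduct.lift HeisAux.iotaHom HeisAux.sHom HeisAux.compat with hΦ
  have hΦval : ∀ x, Φ x = HeisAux.iotaHom x.left * HeisAux.sHom x.right := fun x => rfl
  -- iota images are in the kernel of ϑ
  have hiotaker : ∀ v : Multiplicative (Fin 2 → ℤ), ϑ (HeisAux.iotaHom v) = 1 := by
    intro v
    apply hker'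
    intro p
    exact ⟨rfl, rfl⟩
  -- injectivity
  have hinj : Function.Injective Φ := by
    rw [injective_iff_map_eq_one]
    rintro ⟨v, g⟩ hx
    rw [hΦval] at hx
    have hg : g = 1 := by
      have := congrArg ϑ hx
      rw [map_mul, hiotaker, hsec, one_mul, map_one] at this
      exact this
    subst hg
    rw [map_one, mul_one] at hx
    have hv : v = 1 := by
      have e1 := MulEquiv.ext_iff.mp hx (⟨1, 0, 0⟩ : Heis)
      have e2 := MulEquiv.ext_iff.mp hx (⟨0, 1, 0⟩ : Heis)
      have c1 := congrArg Heis.c e1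
      have c2 := congrArg Heis.c e2
      simp only [MulAut.one_apply] at c1 c2
      have c1' : Multiplicative.toAdd v 1 = 0 := by
        have : (0 : ℤ) - Multiplicative.toAdd v 1 * 1 + Multiplicative.toAdd v 0 * 0 = 0 := c1
        linarith
      have c2' : Multiplicative.toAdd v 0 = 0 := by
        have : (0 : ℤ) - Multiplicative.toAdd v 1 * 0 + Multiplicative.toAdd v 0 * 1 = 0 := c2
        linarith
      have : Multiplicative.toAdd v = 0 := by
        funext i
        fin_cases i
        · exact c2'
        · exact c1'
      have := congrArg Multiplicative.ofAdd this
      simpa using this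
    rw [hv]
    rfl
  -- surjectivity
  have hsurj : Function.Surjective Φ := by
    intro ω
    set g := ϑ ω with hg
    set ω' := ω * (HeisAux.sHom g)⁻¹ with hω'
    have hθω' : ϑ ω' = 1 := by
      rw [hω', map_mul, map_inv, hsec, ← hg, mul_inv_cancel]
    have hab := hker ω' hθω'
    have ha : ∀ p : Heis, (ω' p).a = p.a := fun p => (hab p).1
    have hb : ∀ p : Heis, (ω' p).b = p.b := fun p => (hab p).2
    have hc : ∀ x y : Heis, (ω' (x * y)).c = (ω' x).c + (ω' y).c + x.a * y.b := by
      intro x y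
      rw [map_mul]
      simp [ha, hb]
    set m := (ω' ⟨1, 0, 0⟩).c with hm
    set n := (ω' ⟨0, 1, 0⟩).c with hn
    -- ψ for the X-direction
    have hX : ∀ a : ℤ, (ω' ⟨a, 0, 0⟩).c = a * m := by
      have hadd : ∀ a a' : ℤ, (ω' ⟨a + a', 0, 0⟩).c
          = (ω' ⟨a, 0, 0⟩).c + (ω' ⟨a', 0, 0⟩).c := by
        intro a a'
        have hxy : (⟨a, 0, 0⟩ : Heis) * ⟨a', 0, 0⟩ = ⟨a + a', 0, 0⟩ := by
          ext <;> simp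
        rw [← hxy, hc]
        ring
      set ψ : ℤ →+ ℤ := AddMonoidHom.mk' (fun a => (ω' ⟨a, 0, 0⟩).c) hadd with hψ
      intro a
      have := ψ.map_zsmul a 1
      simpa [hψ, zsmul_eq_mul, hm] using this
    have hY : ∀ b : ℤ, (ω' ⟨0, b, 0⟩).c = b * n := by
      have hadd : ∀ b b' : ℤ, (ω' ⟨0, b + b', 0⟩).c
          = (ω' ⟨0, b, 0⟩).c + (ω' ⟨0, b', 0⟩).c := by
        intro b b'
        have hxy : (⟨0, b, 0⟩ : Heis) * ⟨0, b', 0⟩ = ⟨0, b + b', 0⟩ := by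
          ext <;> simp
        rw [← hxy, hc]
        ring
      set ψ : ℤ →+ ℤ := AddMonoidHom.mk' (fun b => (ω' ⟨0, b, 0⟩).c) hadd with hψ
      intro b
      have := ψ.map_zsmul b 1
      simpa [hψ, zsmul_eq_mul, hn] using this
    -- central direction
    have hZ1 : (ω' ⟨0, 0, 1⟩).c = 1 := by
      have e1 : (⟨1, 0, 0⟩ : Heis) * ⟨0, 1, 0⟩ = ⟨1, 1, 1⟩ := by ext <;> simp
      have e2 : (⟨0, 1, 0⟩ : Heis) * ⟨1, 0, 0⟩ = ⟨1, 1, 0⟩ := by ext <;> simp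
      have e3 : (⟨1, 1, 0⟩ : Heis) * ⟨0, 0, 1⟩ = ⟨1, 1, 1⟩ := by ext <;> simp
      have k1 := hc (⟨1, 0, 0⟩ : Heis) ⟨0, 1, 0⟩
      have k2 := hc (⟨0, 1, 0⟩ : Heis) ⟨1, 0, 0⟩
      have k3 := hc (⟨1, 1, 0⟩ : Heis) ⟨0, 0, 1⟩
      rw [e1] at k1
      rw [e2] at k2
      rw [e3] at k3
      simp only at k1 k2 k3
      rw [k1] at k3
      rw [k2] at k3
      linarith [k3]
    have hZ : ∀ c : ℤ, (ω' ⟨0, 0, c⟩).c = c := by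
      have hadd : ∀ c c' : ℤ, (ω' ⟨0, 0, c + c'⟩).c
          = (ω' ⟨0, 0, c⟩).c + (ω' ⟨0, 0, c'⟩).c := by
        intro c c'
        have hxy : (⟨0, 0, c⟩ : Heis) * ⟨0, 0, c'⟩ = ⟨0, 0, c + c'⟩ := by
          ext <;> simp
        rw [← hxy, hc]
        ring
      set ψ : ℤ →+ ℤ := AddMonoidHom.mk' (fun c => (ω' ⟨0, 0, c⟩).c) hadd with hψ
      intro c
      have := ψ.map_zsmul c 1
      simp only [hψ, AddMonoidHom.mk'_apply, zsmul_eq_mul, Int.cast_id, mul_one] at this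
      rw [this, hZ1, mul_one]
    -- the general formula
    have hgen : ∀ p : Heis, (ω' p).c = p.c + m * p.a + n * p.b := by
      intro p
      have dec1 : (⟨p.a, 0, 0⟩ : Heis) * ⟨0, p.b, 0⟩ = ⟨p.a, p.b, p.a * p.b⟩ := by
        ext <;> simp
      have dec2 : (⟨p.a, p.b, p.a * p.b⟩ : Heis) * ⟨0, 0, p.c - p.a * p.b⟩ = p := by
        ext <;> simp
      have k1 := hc (⟨p.a, 0, 0⟩ : Heis) ⟨0, p.b, 0⟩
      have k2 := hc (⟨p.a, p.b, p.a * p.b⟩ : Heis) ⟨0, 0, p.c - p.a * p.b⟩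
      rw [dec1] at k1
      rw [dec2] at k2
      rw [k1, hX, hY, hZ] at k2
      simp only at k2
      rw [k2]
      ring
    refine ⟨⟨Multiplicative.ofAdd ![n, -m], g⟩, ?_⟩
    have hval : Φ ⟨Multiplicative.ofAdd ![n, -m], g⟩
        = HeisAux.iotaHom (Multiplicative.ofAdd ![n, -m]) * HeisAux.sHom g := rfl
    rw [hval]
    have hiota : HeisAux.iotaHom (Multiplicative.ofAdd ![n, -m]) = ω' := by
      apply MulEquiv.ext
      intro p
      show HeisAux.iota ![n, -m] p = ω' p
      ext
      · exact (ha p).symm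
      · exact (hb p).symm
      · rw [HeisAux.iota_c, hgen p]
        simp only [Matrix.cons_val_zero, Matrix.cons_val_one, Matrix.head_cons]
        ring
    rw [hiota, hω', inv_mul_cancel_right]
  exact ⟨⟨HeisAux.sHom, hsec⟩,
    ⟨(MulEquiv.ofBijective Φ ⟨hinj, hsurj⟩).symm⟩⟩
end

section
/- The first group cohomology H¹(GL(2,ℤ), ℤ ⊕ ℤ) vanishes, where GL(2,ℤ) acts on ℤ ⊕ ℤ by the natural matrix action; i.e. every map φ : GL(2,ℤ) → ℤ ⊕ ℤ satisfying φ(g₁g₂) = φ(g₁) + g₁·φ(g₂) is of the form φ(g) = g·a − a for some a ∈ ℤ ⊕ ℤ. -/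
/-- `H¹(GL(2,ℤ), ℤ ⊕ ℤ) = 0` for the natural matrix action: every 1-cocycle
`φ : GL(2,ℤ) → ℤ ⊕ ℤ` is a 1-coboundary `g ↦ g • a - a`. -/
theorem glZ_H1_trivial (φ : GL (Fin 2) ℤ → Fin 2 → ℤ)
    (hφ : ∀ g₁ g₂ : GL (Fin 2) ℤ,
      φ (g₁ * g₂) = φ g₁ + (g₁ : Matrix (Fin 2) (Fin 2) ℤ).mulVec (φ g₂)) :
    ∃ a : Fin 2 → ℤ, ∀ g : GL (Fin 2) ℤ,
      φ g = (g : Matrix (Fin 2) (Fin 2) ℤ).mulVec a - a := by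
  set a : Fin 2 → ℤ := -φ (-1) with ha
  have key : ∀ g : GL (Fin 2) ℤ, ∀ i,
      2 * φ g i = ((g : Matrix (Fin 2) (Fin 2) ℤ).mulVec a - a) i := by
    intro g i
    have h1 := hφ g (-1)
    have h2 := hφ (-1) g
    rw [show g * (-1) = (-1) * g by rw [mul_neg_one, neg_one_mul]] at h1
    simp only [Units.val_neg, Units.val_one, Matrix.neg_mulVec, Matrix.one_mulVec] at h2
    have h3 : φ g + (g : Matrix (Fin 2) (Fin 2) ℤ).mulVec (φ (-1)) = φ (-1) + -φ g :=
      h1.symm.trans h2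
    have h4 := congrFun h3 i
    simp only [Pi.add_apply, Pi.neg_apply, Pi.sub_apply, ha,
      Matrix.mulVec_neg] at h4 ⊢
    linarith
  -- the two shear matrices
  have hT : (!![1,1;0,1] : Matrix (Fin 2) (Fin 2) ℤ) * !![1,-1;0,1] = 1 := by
    ext i j; fin_cases i <;> fin_cases j <;>
      simp [Matrix.mul_apply, Fin.sum_univ_two]
  have hT' : (!![1,-1;0,1] : Matrix (Fin 2) (Fin 2) ℤ) * !![1,1;0,1] = 1 := by
    ext i j; fin_cases i <;> fin_cases j <;>
      simp [Matrix.mul_apply, Fin.sum_univ_two]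
  have hL : (!![1,0;1,1] : Matrix (Fin 2) (Fin 2) ℤ) * !![1,0;-1,1] = 1 := by
    ext i j; fin_cases i <;> fin_cases j <;>
      simp [Matrix.mul_apply, Fin.sum_univ_two]
  have hL' : (!![1,0;-1,1] : Matrix (Fin 2) (Fin 2) ℤ) * !![1,0;1,1] = 1 := by
    ext i j; fin_cases i <;> fin_cases j <;>
      simp [Matrix.mul_apply, Fin.sum_univ_two]
  set T : GL (Fin 2) ℤ := ⟨!![1,1;0,1], !![1,-1;0,1], hT, hT'⟩ with hTdef
  set L : GL (Fin 2) ℤ := ⟨!![1,0;1,1], !![1,0;-1,1], hL, hL'⟩ with hLdef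
  have ha1 : a 1 = 2 * φ T 0 := by
    have h := key T 0
    simp [hTdef, Matrix.mulVec, dotProduct, Fin.sum_univ_two] at h
    linarith
  have ha0 : a 0 = 2 * φ L 1 := by
    have h := key L 1
    simp [hLdef, Matrix.mulVec, dotProduct, Fin.sum_univ_two] at h
    linarith
  have hab : ∀ j : Fin 2, a j = 2 * ![φ L 1, φ T 0] j := by
    intro j; fin_cases j
    · simpa using ha0
    · simpa using ha1
  refine ⟨![φ L 1, φ T 0], fun g => ?_⟩
  funext i
  have h := key g i
  simp only [Pi.sub_apply, Matrix.mulVec, dotProduct, Fin.sum_univ_two] at h ⊢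
  rw [hab 0, hab 1, hab i] at h
  ring_nf at h ⊢
  linarith
end

section
/- The set of group-homomorphism sections of ϑ : Aut(Heis(3,ℤ)) → GL(2,ℤ) is nonempty and is a principal homogeneous space (torsor) under the group ℤ ⊕ ℤ: the group of 1-cocycles GL(2,ℤ) → ℤ ⊕ ℤ is isomorphic to ℤ ⊕ ℤ (every 1-cocycle is a coboundary g ↦ g·a − a with a uniquely determined a), and it acts simply transitively on the set of sections. -/
namespace HeisTorsor
open Matrix

abbrev M2 := Matrix (Fin 2) (Fin 2) ℤ

/-- `2 ×` the quadratic function used in the section. -/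
def gp (m : M2) (x y : ℤ) : ℤ :=
  m 0 0 * m 1 0 * x * x + m 0 1 * m 1 1 * y * y + 2 * m 0 1 * m 1 0 * x * y
  + (m 0 0 + m 1 0 - (m 0 0 * m 1 1 - m 0 1 * m 1 0)) * x
  + (m 0 1 + m 1 1 - (m 0 0 * m 1 1 - m 0 1 * m 1 0)) * y

def f (m : M2) (x y : ℤ) : ℤ := gp m x y / 2

def U (m : M2) : Prop := m 0 0 * m 1 1 - m 0 1 * m 1 0 = 1 ∨ m 0 0 * m 1 1 - m 0 1 * m 1 0 = -1

lemma even_gp (m : M2) (hm : U m) (x y : ℤ) : Even (gp m x y) := by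
  rw [even_iff_two_dvd, show ((2:ℤ)) = ((2:ℕ):ℤ) by norm_num, ← ZMod.intCast_zmod_eq_zero_iff_dvd]
  have hd : ((m 0 0 : ZMod 2) * m 1 1 - m 0 1 * m 1 0) = 1 := by
    rcases hm with h | h <;>
    · have := congrArg (fun t : ℤ => (t : ZMod 2)) h
      push_cast at this
      rw [this]; try decide
  unfold gp
  push_cast
  generalize (m 0 0 : ZMod 2) = p at *
  generalize (m 0 1 : ZMod 2) = q at *
  generalize (m 1 0 : ZMod 2) = r at *
  generalize (m 1 1 : ZMod 2) = s at *
  generalize (x : ZMod 2) = X at *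
  generalize (y : ZMod 2) = Y at *
  revert hd; revert p q r s X Y; decide

lemma two_f (m : M2) (hm : U m) (x y : ℤ) :
    2 * f m x y =
      m 0 0 * m 1 0 * x * x + m 0 1 * m 1 1 * y * y + 2 * m 0 1 * m 1 0 * x * y
      + (m 0 0 + m 1 0 - (m 0 0 * m 1 1 - m 0 1 * m 1 0)) * x
      + (m 0 1 + m 1 1 - (m 0 0 * m 1 1 - m 0 1 * m 1 0)) * y :=
  Int.two_mul_ediv_two_of_even (even_gp m hm x y)

end HeisTorsor
namespace HeisTorsor
open Matrix

def D (m : M2) : ℤ := m 0 0 * m 1 1 - m 0 1 * m 1 0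

def phi (m : M2) (p : Heis) : Heis :=
  ⟨m 0 0 * p.a + m 0 1 * p.b, m 1 0 * p.a + m 1 1 * p.b, D m * p.c + f m p.a p.b⟩

@[simp] lemma phi_a (m : M2) (p : Heis) : (phi m p).a = m 0 0 * p.a + m 0 1 * p.b := rfl
@[simp] lemma phi_b (m : M2) (p : Heis) : (phi m p).b = m 1 0 * p.a + m 1 1 * p.b := rfl
@[simp] lemma phi_c (m : M2) (p : Heis) : (phi m p).c = D m * p.c + f m p.a p.b := rfl

lemma phi_mul (m : M2) (hm : U m) (x y : Heis) :
    phi m (x * y) = phi m x * phi m y := by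
  ext
  · simp; ring
  · simp; ring
  · have h1 := two_f m hm (x.a + y.a) (x.b + y.b)
    have h2 := two_f m hm x.a x.b
    have h3 := two_f m hm y.a y.b
    simp only [phi_c, phi_a, phi_b, Heis.mul_a, Heis.mul_b, Heis.mul_c, D]
    refine mul_left_cancel₀ (a := (2:ℤ)) (by norm_num) ?_
    linear_combination h1 - h2 - h3

lemma mul_entry (m m' : M2) (i j : Fin 2) :
    (m * m') i j = m i 0 * m' 0 j + m i 1 * m' 1 j := by
  simp [Matrix.mul_apply, Fin.sum_univ_two]

lemma U_mul {m m' : M2} (hm : U m) (hm' : U m') : U (m * m') := by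
  unfold U at *
  simp only [mul_entry]
  rcases hm with h | h <;> rcases hm' with h' | h' <;>
    [left; right; right; left] <;>
    first
      | linear_combination (m' 0 0 * m' 1 1 - m' 0 1 * m' 1 0) * h + h'
      | linear_combination (m' 0 0 * m' 1 1 - m' 0 1 * m' 1 0) * h - h'

lemma phi_comp (m m' : M2) (hm : U m) (hm' : U m') (p : Heis) :
    phi m (phi m' p) = phi (m * m') p := by
  ext
  · simp only [phi_a, phi_b, mul_entry]; ring
  · simp only [phi_a, phi_b, mul_entry]; ring
  · have h1 := two_f m' hm' p.a p.b
    have h2 := two_f m hm (m' 0 0 * p.a + m' 0 1 * p.b) (m' 1 0 * p.a + m' 1 1 * p.b)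
    have h3 := two_f (m * m') (U_mul hm hm') p.a p.b
    simp only [mul_entry] at h3
    simp only [phi_c, phi_a, phi_b, D, mul_entry]
    refine mul_left_cancel₀ (a := (2:ℤ)) (by norm_num) ?_
    linear_combination (m 0 0 * m 1 1 - m 0 1 * m 1 0) * h1 + h2 - h3

lemma phi_one (p : Heis) : phi 1 p = p := by
  have e : ∀ i j : Fin 2, (1 : M2) i j = if i = j then 1 else 0 := fun i j => Matrix.one_apply
  ext
  · simp [e]
  · simp [e]
  · simp only [phi_c, D, f, gp, e]
    norm_num

end HeisTorsor
namespace HeisTorsor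
open Matrix

lemma U_of_GL (g : GL (Fin 2) ℤ) : U (g : M2) := by
  have hu : IsUnit ((g : M2).det) :=
    IsUnit.of_mul_eq_one ((g⁻¹ : GL (Fin 2) ℤ) : M2).det
      (by rw [← Matrix.det_mul]; norm_cast; rw [mul_inv_cancel]; simp)
  rcases Int.isUnit_iff.mp hu with h | h <;> rw [Matrix.det_fin_two] at h
  · exact Or.inl h
  · exact Or.inr h

/-- The section `GL(2,ℤ) → Aut(Heis)` as a `MulEquiv` for each `g`. -/
def E (g : GL (Fin 2) ℤ) : MulAut Heis where
  toFun := phi (g : M2)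
  invFun := phi ((g⁻¹ : GL (Fin 2) ℤ) : M2)
  left_inv p := by
    rw [phi_comp _ _ (U_of_GL g⁻¹) (U_of_GL g)]
    have : ((g⁻¹ : GL (Fin 2) ℤ) : M2) * (g : M2) = 1 := by
      norm_cast; rw [inv_mul_cancel]; rfl
    rw [this, phi_one]
  right_inv p := by
    rw [phi_comp _ _ (U_of_GL g) (U_of_GL g⁻¹)]
    have : (g : M2) * ((g⁻¹ : GL (Fin 2) ℤ) : M2) = 1 := by
      norm_cast; rw [mul_inv_cancel]; rfl
    rw [this, phi_one]
  map_mul' := phi_mul _ (U_of_GL g)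

@[simp] lemma E_apply (g : GL (Fin 2) ℤ) (p : Heis) : E g p = phi (g : M2) p := rfl

/-- The section as a monoid homomorphism. -/
def A : GL (Fin 2) ℤ →* MulAut Heis where
  toFun := E
  map_one' := by
    refine MulEquiv.ext fun p => ?_
    show phi ((1 : GL (Fin 2) ℤ) : M2) p = p
    have : ((1 : GL (Fin 2) ℤ) : M2) = 1 := rfl
    rw [this, phi_one]
  map_mul' g h := by
    refine MulEquiv.ext fun p => ?_
    show phi ((g * h : GL (Fin 2) ℤ) : M2) p = phi (g : M2) (phi (h : M2) p)
    rw [phi_comp _ _ (U_of_GL g) (U_of_GL h)]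
    rfl

lemma theta_A (ϑ : MulAut Heis →* GL (Fin 2) ℤ)
    (hϑ : ∀ (ω : MulAut Heis) (p : Heis),
      (ϑ ω : Matrix (Fin 2) (Fin 2) ℤ).mulVec ![p.a, p.b] = ![(ω p).a, (ω p).b])
    (g : GL (Fin 2) ℤ) : ϑ (A g) = g := by
  apply Units.ext
  ext i j
  have h0 := congrFun (hϑ (A g) ⟨1, 0, 0⟩) i
  have h1 := congrFun (hϑ (A g) ⟨0, 1, 0⟩) i
  have hA : ∀ p : Heis, A g p = phi (g : M2) p := fun p => rfl
  rw [hA] at h0 h1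
  simp [Matrix.mulVec, dotProduct, Fin.sum_univ_two] at h0 h1
  fin_cases i <;> fin_cases j <;>
    simp only [Fin.mk_zero, Fin.mk_one, Matrix.cons_val_zero, Matrix.cons_val_one,
      Matrix.head_cons] at h0 h1 ⊢ <;>
    first | exact h0 | exact h1

end HeisTorsor
namespace HeisTorsor
open Matrix

def Sg : GL (Fin 2) ℤ := ⟨!![1,1;0,1], !![1,-1;0,1],
  by rw [Matrix.mul_fin_two, Matrix.one_fin_two]; norm_num,
  by rw [Matrix.mul_fin_two, Matrix.one_fin_two]; norm_num⟩

def Tg : GL (Fin 2) ℤ := ⟨!![1,0;1,1], !![1,0;-1,1],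
  by rw [Matrix.mul_fin_two, Matrix.one_fin_two]; norm_num,
  by rw [Matrix.mul_fin_two, Matrix.one_fin_two]; norm_num⟩

def zg : GL (Fin 2) ℤ := ⟨-1, -1, by simp, by simp⟩

lemma cocycle_coboundary (φ : GL (Fin 2) ℤ → Fin 2 → ℤ)
    (hφ : ∀ g₁ g₂ : GL (Fin 2) ℤ,
      φ (g₁ * g₂) = φ g₁ + (g₁ : Matrix (Fin 2) (Fin 2) ℤ).mulVec (φ g₂)) :
    ∃! a : Fin 2 → ℤ, ∀ g : GL (Fin 2) ℤ,
      φ g = (g : Matrix (Fin 2) (Fin 2) ℤ).mulVec a - a := by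
  have key : ∀ g : GL (Fin 2) ℤ, ∀ i : Fin 2,
      φ zg i - φ g i = φ g i + ((g : M2) i 0 * φ zg 0 + (g : M2) i 1 * φ zg 1) := by
    intro g i
    have hc : zg * g = g * zg := Units.ext (by show (-1) * g.val = g.val * (-1); simp)
    have h1 := congrFun (hφ zg g) i
    have h2 := congrFun (hφ g zg) i
    rw [hc] at h1
    rw [h1] at h2
    have hz : ((zg : M2)).mulVec (φ g) = -φ g := by
      show ((-1 : M2)).mulVec (φ g) = -φ g
      rw [Matrix.neg_mulVec, Matrix.one_mulVec]
    rw [hz] at h2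
    have hmv : ((g : M2)).mulVec (φ zg) i = (g : M2) i 0 * φ zg 0 + (g : M2) i 1 * φ zg 1 := by
      simp [Matrix.mulVec, dotProduct, Fin.sum_univ_two]
    simp only [Pi.add_apply, Pi.neg_apply] at h2
    rw [← hmv]
    linarith [congrFun (hφ g zg) i, h2]
  set a : Fin 2 → ℤ := ![φ Tg 1, φ Sg 0] with ha
  have hS0 : (Sg : M2) 0 0 = 1 := rfl
  have hv0 : φ zg 0 = -2 * a 0 := by
    have h := key Tg 1
    have e0 : (Tg : M2) 1 0 = 1 := rfl
    have e1 : (Tg : M2) 1 1 = 1 := rfl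
    rw [e0, e1] at h
    have : a 0 = φ Tg 1 := rfl
    rw [this]; linarith
  have hv1 : φ zg 1 = -2 * a 1 := by
    have h := key Sg 0
    have e0 : (Sg : M2) 0 0 = 1 := rfl
    have e1 : (Sg : M2) 0 1 = 1 := rfl
    rw [e0, e1] at h
    have : a 1 = φ Sg 0 := rfl
    rw [this]; linarith
  refine ⟨a, ?_, ?_⟩
  · intro g
    funext i
    have h := key g i
    rw [hv0, hv1] at h
    have hmv : ((g : M2)).mulVec a i = (g : M2) i 0 * a 0 + (g : M2) i 1 * a 1 := by
      simp [Matrix.mulVec, dotProduct, Fin.sum_univ_two]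
    simp only [Pi.sub_apply]
    rw [hmv]
    have hvi : φ zg i = -2 * a i := by
      fin_cases i
      · simpa only [Fin.mk_zero] using hv0
      · simpa only [Fin.mk_one] using hv1
    refine mul_left_cancel₀ (a := (2:ℤ)) (by norm_num) ?_
    linear_combination -h + hvi
  · intro b hb
    have h := hb zg
    have hz : ((zg : M2)).mulVec b = -b := by
      show ((-1 : M2)).mulVec b = -b
      rw [Matrix.neg_mulVec, Matrix.one_mulVec]
    rw [hz] at h
    have h0 := congrFun h 0
    have h1 := congrFun h 1
    simp only [Pi.sub_apply, Pi.neg_apply] at h0 h1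
    funext i
    fin_cases i
    · simp only [Fin.mk_zero]; rw [hv0] at h0; linarith
    · simp only [Fin.mk_one]; rw [hv1] at h1; linarith
end HeisTorsor
namespace HeisTorsor
open Matrix

lemma conj_apply' (u v c₀ : ℤ) (p : Heis) :
    MulAut.conj (⟨u, v, c₀⟩ : Heis) p = ⟨p.a, p.b, p.c + u * p.b - v * p.a⟩ := by
  have : MulAut.conj (⟨u, v, c₀⟩ : Heis) p = ⟨u, v, c₀⟩ * p * (⟨u, v, c₀⟩ : Heis)⁻¹ := rfl
  rw [this]
  ext <;> simp <;> ring

/-- Automorphisms inducing the identity on the abelianization are the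
explicit inner automorphisms. -/
lemma inner_char (ϑ : MulAut Heis →* GL (Fin 2) ℤ)
    (hϑ : ∀ (ω : MulAut Heis) (p : Heis),
      (ϑ ω : Matrix (Fin 2) (Fin 2) ℤ).mulVec ![p.a, p.b] = ![(ω p).a, (ω p).b])
    (ω : MulAut Heis) (hω : ϑ ω = 1) :
    ω = MulAut.conj (⟨(ω ⟨0,1,0⟩).c, -(ω ⟨1,0,0⟩).c, 0⟩ : Heis) := by
  have hab : ∀ p : Heis, (ω p).a = p.a ∧ (ω p).b = p.b := by
    intro p
    have h := hϑ ω p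
    rw [hω] at h
    have h1 : ((1 : GL (Fin 2) ℤ) : M2).mulVec ![p.a, p.b] = ![p.a, p.b] := by
      show ((1 : M2)).mulVec ![p.a, p.b] = ![p.a, p.b]
      rw [Matrix.one_mulVec]
    rw [h1] at h
    exact ⟨(congrFun h.symm 0), (congrFun h.symm 1)⟩
  set δ : Heis → ℤ := fun p => (ω p).c - p.c with hδdef
  have hδ : ∀ x y : Heis, δ (x * y) = δ x + δ y := by
    intro x y
    have h := map_mul ω x y
    have hc := congrArg Heis.c h
    simp only [Heis.mul_c] at hc
    have ha := (hab x).1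
    have hb := (hab y).2
    simp only [hδdef]
    simp only [Heis.mul_c]
    rw [hc, ha, hb]
    ring
  have mkX : ∀ s t : ℤ, (⟨s,0,0⟩ : Heis) * ⟨t,0,0⟩ = ⟨s+t,0,0⟩ := by
    intro s t; ext <;> simp
  have mkY : ∀ s t : ℤ, (⟨0,s,0⟩ : Heis) * ⟨0,t,0⟩ = ⟨0,s+t,0⟩ := by
    intro s t; ext <;> simp
  have mkZ : ∀ s t : ℤ, (⟨0,0,s⟩ : Heis) * ⟨0,0,t⟩ = ⟨0,0,s+t⟩ := by
    intro s t; ext <;> simp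
  set dX := δ ⟨1,0,0⟩ with hdX
  set dY := δ ⟨0,1,0⟩ with hdY
  set dZ := δ ⟨0,0,1⟩ with hdZ
  have lin : ∀ (F : ℤ → Heis), (∀ s t, F s * F t = F (s+t)) → ∀ t : ℤ, δ (F t) = t * δ (F 1) := by
    intro F hF t
    let G : ℤ →+ ℤ := AddMonoidHom.mk' (fun t => δ (F t)) (by
      intro s t
      show δ (F (s + t)) = δ (F s) + δ (F t)
      rw [← hF s t, hδ])
    have : G t = δ (F t) := rfl
    rw [← this]
    have h1 : G 1 = δ (F 1) := rfl
    calc G t = G (t • (1:ℤ)) := by rw [smul_eq_mul, mul_one]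
    _ = t • G 1 := map_zsmul G t 1
    _ = t * δ (F 1) := by rw [smul_eq_mul, h1]
  have linX : ∀ t : ℤ, δ ⟨t,0,0⟩ = t * dX := lin (fun t => ⟨t,0,0⟩) (fun s t => mkX s t) 
  have linY : ∀ t : ℤ, δ ⟨0,t,0⟩ = t * dY := lin (fun t => ⟨0,t,0⟩) (fun s t => mkY s t)
  have linZ : ∀ t : ℤ, δ ⟨0,0,t⟩ = t * dZ := lin (fun t => ⟨0,0,t⟩) (fun s t => mkZ s t)
  -- δ Z = 0
  have hXY : (⟨1,0,0⟩ : Heis) * ⟨0,1,0⟩ = ⟨1,1,1⟩ := by ext <;> simp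
  have hYX : (⟨0,1,0⟩ : Heis) * ⟨1,0,0⟩ = ⟨1,1,0⟩ := by ext <;> simp
  have hYXZ : (⟨1,1,0⟩ : Heis) * ⟨0,0,1⟩ = ⟨1,1,1⟩ := by ext <;> simp
  have hdZ0 : dZ = 0 := by
    have e1 : δ ⟨1,1,1⟩ = dX + dY := by rw [← hXY, hδ]
    have e2 : δ ⟨1,1,1⟩ = (dY + dX) + dZ := by
      rw [← hYXZ, hδ, ← hYX, hδ]
    linarith
  -- general formula
  have gen : ∀ p : Heis, δ p = p.a * dX + p.b * dY := by
    intro p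
    have comb : (⟨p.a,0,0⟩ : Heis) * ⟨0,p.b,0⟩ * ⟨0,0,p.c - p.a * p.b⟩ = p := by
      ext <;> simp
    have := congrArg δ comb
    rw [hδ, hδ, linX, linY, linZ, hdZ0] at this
    linarith [this]
  refine MulEquiv.ext fun p => ?_
  rw [conj_apply' _ _ _ p]
  have hc : (ω p).c = p.c + p.a * dX + p.b * dY := by
    have := gen p
    simp only [hδdef] at this
    linarith
  have huv0 : (ω ⟨0,1,0⟩).c = dY := by
    have := gen ⟨0,1,0⟩
    simp only [hδdef] at this
    simp at this ⊢
    linarith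
  have huv1 : (ω ⟨1,0,0⟩).c = dX := by
    have := gen ⟨1,0,0⟩
    simp only [hδdef] at this
    simp at this ⊢
    linarith
  rw [huv0, huv1]
  ext
  · exact (hab p).1
  · exact (hab p).2
  · show (ω p).c = p.c + dY * p.b - -dX * p.a
    rw [hc]; ring
end HeisTorsor

open HeisTorsor in
/-- The set of group-homomorphism sections of `ϑ` is nonempty and is a principal homogeneous
space under `ℤ ⊕ ℤ`: every 1-cocycle `GL(2,ℤ) → ℤ ⊕ ℤ` is the coboundary `g ↦ g • a - a` of a
unique `a ∈ ℤ ⊕ ℤ` (so the group of 1-cocycles is isomorphic to `ℤ ⊕ ℤ`), and for any two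
sections there is a unique `a ∈ ℤ ⊕ ℤ` whose coboundary (acting by inner automorphisms)
carries one section to the other. -/
theorem heis_sections_torsor (ϑ : MulAut Heis →* GL (Fin 2) ℤ)
    (hϑ : ∀ (ω : MulAut Heis) (p : Heis),
      (ϑ ω : Matrix (Fin 2) (Fin 2) ℤ).mulVec ![p.a, p.b] = ![(ω p).a, (ω p).b]) :
    (∃ α : GL (Fin 2) ℤ →* MulAut Heis, ∀ g, ϑ (α g) = g) ∧
    (∀ φ : GL (Fin 2) ℤ → Fin 2 → ℤ,
      (∀ g₁ g₂ : GL (Fin 2) ℤ,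
        φ (g₁ * g₂) = φ g₁ + (g₁ : Matrix (Fin 2) (Fin 2) ℤ).mulVec (φ g₂)) →
      ∃! a : Fin 2 → ℤ, ∀ g : GL (Fin 2) ℤ,
        φ g = (g : Matrix (Fin 2) (Fin 2) ℤ).mulVec a - a) ∧
    (∀ α₁ α₂ : GL (Fin 2) ℤ →* MulAut Heis,
      (∀ g, ϑ (α₁ g) = g) → (∀ g, ϑ (α₂ g) = g) →
      ∃! a : Fin 2 → ℤ, ∀ g : GL (Fin 2) ℤ,
        α₂ g = MulAut.conj (⟨((g : Matrix (Fin 2) (Fin 2) ℤ).mulVec a - a) 0,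
          ((g : Matrix (Fin 2) (Fin 2) ℤ).mulVec a - a) 1, 0⟩ : Heis) * α₁ g) := by
  refine ⟨⟨A, theta_A ϑ hϑ⟩, fun φ hφ => cocycle_coboundary φ hφ, ?_⟩
  intro α₁ α₂ h₁ h₂
  set ω : GL (Fin 2) ℤ → MulAut Heis := fun g => α₂ g * (α₁ g)⁻¹ with hωdef
  have hθω : ∀ g, ϑ (ω g) = 1 := by
    intro g
    show ϑ (α₂ g * (α₁ g)⁻¹) = 1
    rw [map_mul, map_inv, h₁, h₂, mul_inv_cancel]
  set u : GL (Fin 2) ℤ → ℤ := fun g => (ω g ⟨0,1,0⟩).c with hudef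
  set v : GL (Fin 2) ℤ → ℤ := fun g => -(ω g ⟨1,0,0⟩).c with hvdef
  have hconj : ∀ g, ω g = MulAut.conj (⟨u g, v g, 0⟩ : Heis) :=
    fun g => inner_char ϑ hϑ (ω g) (hθω g)
  set φ : GL (Fin 2) ℤ → Fin 2 → ℤ := fun g => ![u g, v g] with hφdef
  have hcoc : ∀ g₁ g₂ : GL (Fin 2) ℤ,
      φ (g₁ * g₂) = φ g₁ + (g₁ : Matrix (Fin 2) (Fin 2) ℤ).mulVec (φ g₂) := by
    intro g₁ g₂
    have hsplit : ω (g₁ * g₂) = ω g₁ * (α₁ g₁ * ω g₂ * (α₁ g₁)⁻¹) := by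
      show α₂ (g₁*g₂) * (α₁ (g₁*g₂))⁻¹
        = (α₂ g₁ * (α₁ g₁)⁻¹) * (α₁ g₁ * (α₂ g₂ * (α₁ g₂)⁻¹) * (α₁ g₁)⁻¹)
      rw [map_mul, map_mul]
      group
    set t : Heis := α₁ g₁ (⟨u g₂, v g₂, 0⟩ : Heis) with htdef
    have hconj2 : α₁ g₁ * MulAut.conj (⟨u g₂, v g₂, 0⟩ : Heis) * (α₁ g₁)⁻¹
        = MulAut.conj t := by
      refine MulEquiv.ext fun x => ?_
      show α₁ g₁ (MulAut.conj _ ((α₁ g₁)⁻¹ x)) = MulAut.conj t x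
      have hx : α₁ g₁ ((α₁ g₁)⁻¹ x) = x := by
        rw [MulAut.inv_def, MulEquiv.apply_symm_apply]
      rw [MulAut.conj_apply, MulAut.conj_apply, map_mul, map_mul, map_inv, hx, htdef]
    have hω12 : ω (g₁ * g₂) = MulAut.conj ((⟨u g₁, v g₁, 0⟩ : Heis) * t) := by
      rw [hsplit, hconj g₁, hconj g₂, hconj2, ← map_mul]
    have hprod : (⟨u g₁, v g₁, 0⟩ : Heis) * t = ⟨u g₁ + t.a, v g₁ + t.b, 0 + t.c + u g₁ * t.b⟩ := rfl
    have htab := hϑ (α₁ g₁) (⟨u g₂, v g₂, 0⟩ : Heis)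
    rw [h₁ g₁] at htab
    have hta : t.a = (g₁ : Matrix (Fin 2) (Fin 2) ℤ).mulVec ![u g₂, v g₂] 0 :=
      (congrFun htab 0).symm
    have htb : t.b = (g₁ : Matrix (Fin 2) (Fin 2) ℤ).mulVec ![u g₂, v g₂] 1 :=
      (congrFun htab 1).symm
    have hu12 : u (g₁ * g₂) = u g₁ + t.a := by
      show (ω (g₁ * g₂) ⟨0,1,0⟩).c = u g₁ + t.a
      rw [hω12, hprod, conj_apply']
      simp
    have hv12 : v (g₁ * g₂) = v g₁ + t.b := by
      show -(ω (g₁ * g₂) ⟨1,0,0⟩).c = v g₁ + t.b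
      rw [hω12, hprod, conj_apply']
      simp
    funext i
    fin_cases i
    · show u (g₁ * g₂) = (φ g₁ + _) ⟨0, by norm_num⟩
      simp only [Pi.add_apply, hφdef, Fin.mk_zero, Matrix.cons_val_zero]
      rw [hu12, hta]
    · show v (g₁ * g₂) = (φ g₁ + _) ⟨1, by norm_num⟩
      simp only [Pi.add_apply, hφdef, Fin.mk_one, Matrix.cons_val_one, Matrix.head_cons,
        Matrix.cons_val_zero]
      rw [hv12, htb]
  obtain ⟨a, ha, hauniq⟩ := cocycle_coboundary φ hcoc
  have hmain : ∀ g : GL (Fin 2) ℤ,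
      α₂ g = MulAut.conj (⟨φ g 0, φ g 1, 0⟩ : Heis) * α₁ g := by
    intro g
    have hrec : (⟨φ g 0, φ g 1, 0⟩ : Heis) = ⟨u g, v g, 0⟩ := by
      simp [hφdef]
    rw [hrec, ← hconj g]
    show α₂ g = (α₂ g * (α₁ g)⁻¹) * α₁ g
    rw [inv_mul_cancel_right]
  refine ⟨a, fun g => ?_, fun b hb => ?_⟩
  · have hφg : (g : Matrix (Fin 2) (Fin 2) ℤ).mulVec a - a = φ g := (ha g).symm
    rw [hφg]
    exact hmain g
  · refine hauniq b fun g => ?_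
    have e1 := hb g
    have e2 := hmain g
    rw [e2] at e1
    have hcancel := mul_right_cancel e1.symm
    have c0 := congrArg (fun e : MulAut Heis => (e ⟨0,1,0⟩).c) hcancel
    have c1 := congrArg (fun e : MulAut Heis => -(e ⟨1,0,0⟩).c) hcancel
    simp only [conj_apply'] at c0 c1
    simp at c0 c1
    funext i
    fin_cases i
    · simpa using c0.symm
    · simpa using c1.symm
end
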